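/- For fixed T > 0, consider G₁(s;L,T) := T Γ(1+2s) sin(πs) / (2π L^{1+2s}) on s ∈ (0,1). If L is large enough, then G₁(·;L,T) has a unique critical point s_L in (0,1), this point is a maximum, and s_L → 0 as L → +∞. -/

import Mathlib

open Real Set Filter

/-- `G₁(s;L,T) = T Γ(1+2s) sin(πs) / (2π L^(1+2s))`. -/
noncomputable def G1 (s L T : ℝ) : ℝ :=
  T * Real.Gamma (1+2*s) * Real.sin (π*s) / (2*π*L^(1+2*s))


noncomputable def flog : ℝ → ℝ := Real.log ∘ Real.Gamma
noncomputable def psi (x : ℝ) : ℝ := deriv flog x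
noncomputable def vv (k : ℕ) : ℝ := 6 / (2*(k:ℝ)+1)

lemma flog_diff {x : ℝ} (hx : 0 < x) : DifferentiableAt ℝ flog x := by
  refine (Real.differentiableAt_Gamma ?_).log (Real.Gamma_pos_of_pos hx).ne'
  intro m h; have : (0:ℝ) < -(m:ℝ) := h ▸ hx; have : (0:ℝ) ≤ (m:ℝ) := Nat.cast_nonneg m
  linarith

lemma flog_hasDeriv {x : ℝ} (hx : 0 < x) : HasDerivAt flog (psi x) x :=
  (flog_diff hx).hasDerivAt

lemma flog_rec {x : ℝ} (hx : 0 < x) :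
    Real.log (Real.Gamma (x + 1)) = Real.log (Real.Gamma x) + Real.log x := by
  rw [Real.Gamma_add_one hx.ne', Real.log_mul hx.ne' (Real.Gamma_pos_of_pos hx).ne', add_comm]

lemma psi_mono : MonotoneOn psi (Ioi 0) :=
  Real.convexOn_log_Gamma.monotoneOn_deriv fun _ hx => flog_diff hx

lemma psi_le_log {x : ℝ} (hx : 0 < x) : psi x ≤ Real.log x := by
  have h := Real.convexOn_log_Gamma.deriv_le_slope (mem_Ioi.2 hx)
    (mem_Ioi.2 (by linarith : (0:ℝ) < x + 1)) (by linarith) (flog_diff hx)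
  rw [slope_def_field] at h
  simp only [Function.comp_apply] at h
  rwa [flog_rec hx, add_sub_cancel_left, add_sub_cancel_left, div_one] at h

lemma log_le_psi {x : ℝ} (hx : 1 < x) : Real.log (x - 1) ≤ psi x := by
  have hx1 : (0:ℝ) < x - 1 := by linarith
  have h := Real.convexOn_log_Gamma.slope_le_deriv (mem_Ioi.2 hx1)
    (mem_Ioi.2 (by linarith : (0:ℝ) < x)) (by linarith) (flog_diff (by linarith))
  rw [slope_def_field] at h
  simp only [Function.comp_apply] at h
  have hr : Real.log (Real.Gamma x) = Real.log (Real.Gamma (x-1)) + Real.log (x-1) := by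
    have := flog_rec hx1; rwa [sub_add_cancel] at this
  rwa [hr, add_sub_cancel_left, sub_sub_cancel, div_one] at h

lemma psi_rec {x : ℝ} (hx : 0 < x) : psi (x + 1) = psi x + 1 / x := by
  have h1 : HasDerivAt (fun y => flog (y + 1)) (psi (x+1)) x := by
    simpa [Function.comp_def] using (flog_hasDeriv (by linarith : (0:ℝ) < x + 1)).comp x
      ((hasDerivAt_id x).add_const 1)
  have h2 : HasDerivAt (fun y => flog y + Real.log y) (psi x + 1/x) x := by
    simpa [one_div, Pi.add_def] using (flog_hasDeriv hx).add (Real.hasDerivAt_log hx.ne')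
  have h2' : HasDerivAt (fun y => flog (y + 1)) (psi x + 1/x) x := by
    apply h2.congr_of_eventuallyEq
    filter_upwards [eventually_gt_nhds hx] with y hy
    exact flog_rec hy
  exact h1.unique h2'

lemma psi_shift {x : ℝ} (hx : 0 < x) (n : ℕ) :
    psi (x + n) = psi x + ∑ k ∈ Finset.range n, 1 / (x + k) := by
  induction n with
  | zero => simp
  | succ n ih =>
    have hxn : (0:ℝ) < x + n := by positivity
    have : x + (n+1 : ℕ) = (x + n) + 1 := by push_cast; ring
    rw [this, psi_rec hxn, ih, Finset.sum_range_succ]; ring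

lemma psi_lipschitz {x y : ℝ} (hx : 1/2 ≤ x) (hxy : x ≤ y) :
    psi y ≤ psi x + 6 * (y - x) := by
  set d := y - x with hd
  have hd0 : 0 ≤ d := by simp only [hd]; linarith
  have hx0 : (0:ℝ) < x := by linarith
  have hy0 : (0:ℝ) < y := by linarith
  have key : ∀ n : ℕ, 1 ≤ n → psi y - psi x ≤ (d + 1) / (x + n - 1) + 6 * d := by
    intro n hn
    have hn1 : (1:ℝ) ≤ (n:ℝ) := by exact_mod_cast hn
    have hxn1 : (1:ℝ) < x + n := by linarith
    have hyn : psi (y + n) = psi y + ∑ k ∈ Finset.range n, 1 / (y + k) := psi_shift hy0 n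
    have hxn : psi (x + n) = psi x + ∑ k ∈ Finset.range n, 1 / (x + k) := psi_shift hx0 n
    have hub : psi (y + n) ≤ Real.log (y + n) := psi_le_log (by linarith)
    have hlb : Real.log (x + n - 1) ≤ psi (x + n) := log_le_psi hxn1
    have hpos : (0:ℝ) < x + n - 1 := by linarith
    have hlog : Real.log (y + n) - Real.log (x + n - 1) ≤ (d + 1) / (x + n - 1) := by
      have hpos2 : (0:ℝ) < (y + n) / (x + n - 1) := by positivity
      have h0 := Real.log_le_sub_one_of_pos hpos2
      rw [Real.log_div (by linarith) hpos.ne'] at h0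
      have h2 : (y + n) / (x + n - 1) - 1 = (d + 1) / (x + n - 1) := by
        rw [div_sub_one hpos.ne']; congr 1; simp only [hd]; ring
      linarith [h2 ▸ h0]
    have hsum : ∑ k ∈ Finset.range n, 1 / (x + k) - ∑ k ∈ Finset.range n, 1 / (y + k)
        ≤ 6 * d := by
      rw [← Finset.sum_sub_distrib]
      have hterm : ∀ k ∈ Finset.range n, 1 / (x + k) - 1 / (y + k)
          ≤ d * (vv k - vv (k+1)) := by
        intro k _
        have hk0 : (0:ℝ) ≤ (k:ℝ) := Nat.cast_nonneg k
        have hxkp : (0:ℝ) < x + k := by linarith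
        have hykp : (0:ℝ) < y + k := by linarith
        have h1 : 1 / (x + k) - 1 / (y + k) = d / ((x+k)*(y+k)) := by
          rw [hd, div_sub_div _ _ hxkp.ne' hykp.ne']; ring_nf
        rw [h1]
        have h2 : d / ((x+k)*(y+k)) ≤ d * (4 / (2*k+1)^2) := by
          rw [div_eq_mul_inv]
          apply mul_le_mul_of_nonneg_left _ hd0
          rw [inv_le_iff_one_le_mul₀ (by positivity),
            div_mul_eq_mul_div, mul_comm, le_div_iff₀ (by positivity)]
          nlinarith
        have h3 : d * (4 / (2*(k:ℝ)+1)^2) ≤ d * (vv k - vv (k+1)) := by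
          apply mul_le_mul_of_nonneg_left _ hd0
          simp only [vv]
          push_cast
          have e1 : (0:ℝ) < 2*(k:ℝ)+1 := by linarith
          have e2 : (0:ℝ) < 2*(k:ℝ)+3 := by linarith
          rw [div_sub_div _ _ e1.ne' (by linarith : (2*((k:ℝ)+1)+1) ≠ 0),
            div_le_div_iff₀ (by positivity) (by nlinarith)]
          nlinarith
        linarith
      have htel : ∑ k ∈ Finset.range n, (vv k - vv (k+1)) = vv 0 - vv n :=
        Finset.sum_range_sub' vv n
      have hvvn : (0:ℝ) ≤ vv n := by simp only [vv]; positivity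
      have hvv0 : vv 0 = 6 := by simp [vv]
      calc ∑ k ∈ Finset.range n, (1 / (x + k) - 1 / (y + k))
          ≤ ∑ k ∈ Finset.range n, d * (vv k - vv (k+1)) := Finset.sum_le_sum hterm
        _ = d * (vv 0 - vv n) := by rw [← Finset.mul_sum, htel]
        _ ≤ 6 * d := by rw [hvv0]; nlinarith
    have hsplit : psi y - psi x = (psi (y+n) - psi (x+n)) +
        (∑ k ∈ Finset.range n, 1 / (x + k) - ∑ k ∈ Finset.range n, 1 / (y + k)) := by
      rw [hyn, hxn]; ring
    linarith
  have : psi y - psi x ≤ 6 * d := by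
    refine le_of_forall_pos_le_add fun ε hε => ?_
    obtain ⟨m, hm⟩ := exists_nat_ge ((d+1)/ε)
    have hd1 : (0:ℝ) < d + 1 := by linarith
    have hde : (0:ℝ) < (d+1)/ε := div_pos hd1 hε
    have hxm : (0:ℝ) < x + ((m+1:ℕ):ℝ) - 1 := by push_cast; linarith
    have hfrac : (d+1)/(x + ((m+1:ℕ):ℝ) - 1) ≤ ε := by
      rw [div_le_iff₀ hxm]
      have h1 : (d+1)/ε ≤ x + ((m+1:ℕ):ℝ) - 1 := by push_cast; linarith
      calc d+1 = (d+1)/ε * ε := by field_simp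
        _ ≤ (x + ((m+1:ℕ):ℝ) - 1) * ε := mul_le_mul_of_nonneg_right h1 hε.le
        _ = ε * (x + ((m+1:ℕ):ℝ) - 1) := mul_comm _ _
    have hk := key (m+1) (Nat.le_add_left 1 m)
    linarith
  linarith



noncomputable def gg (L s : ℝ) : ℝ :=
  Real.log s + s * Real.log 4 + Real.log (Real.Gamma (s+1/2))
    - Real.log (Real.Gamma (1-s)) - 2*s*Real.log L

noncomputable def gd (L s : ℝ) : ℝ :=
  1/s + Real.log 4 + psi (s+1/2) + psi (1-s) - 2*Real.log L

lemma gg_hasDeriv (L : ℝ) {s : ℝ} (hs : s ∈ Ioo (0:ℝ) 1) :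
    HasDerivAt (gg L) (gd L s) s := by
  obtain ⟨hs0, hs1⟩ := hs
  have h1 : HasDerivAt (fun y : ℝ => Real.log y) s⁻¹ s := Real.hasDerivAt_log hs0.ne'
  have h2 : HasDerivAt (fun y : ℝ => y * Real.log 4) (Real.log 4) s := by
    simpa using (hasDerivAt_id s).mul_const (Real.log 4)
  have h3 : HasDerivAt (fun y : ℝ => flog (y + 1/2)) (psi (s+1/2)) s := by
    simpa [Function.comp_def] using (flog_hasDeriv (by linarith : (0:ℝ) < s + 1/2)).comp s
      ((hasDerivAt_id s).add_const (1/2))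
  have h4 : HasDerivAt (fun y : ℝ => flog (1 - y)) (-psi (1-s)) s := by
    simpa [Function.comp_def] using (flog_hasDeriv (by linarith : (0:ℝ) < 1 - s)).comp s
      ((hasDerivAt_id s).const_sub 1)
  have h5 : HasDerivAt (fun y : ℝ => 2*y*Real.log L) (2*Real.log L) s := by
    have := ((hasDerivAt_id s).const_mul 2).mul_const (Real.log L)
    simpa [mul_comm, mul_assoc] using this
  have := ((((h1.add h2).add h3).sub h4).sub h5)
  refine this.congr_deriv ?_
  simp only [gd]; ring

lemma G1_eq {T L s : ℝ} (hL : 0 < L) (hs : s ∈ Ioo (0:ℝ) 1) :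
    G1 s L T = (T/(2*Real.sqrt π*L)) * Real.exp (gg L s) := by
  obtain ⟨hs0, hs1⟩ := hs
  have hΓs : 0 < Real.Gamma s := Real.Gamma_pos_of_pos hs0
  have hΓh : 0 < Real.Gamma (s+1/2) := Real.Gamma_pos_of_pos (by linarith)
  have hΓ1s : 0 < Real.Gamma (1-s) := Real.Gamma_pos_of_pos (by linarith)
  have hsin : 0 < Real.sin (π*s) :=
    Real.sin_pos_of_pos_of_lt_pi (by positivity) (by nlinarith [Real.pi_pos])
  have hsqrt : 0 < Real.sqrt π := Real.sqrt_pos.2 Real.pi_pos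
  have hL2s : 0 < L ^ (2*s) := Real.rpow_pos_of_pos hL _
  -- exp (gg L s)
  have e1 : Real.exp (gg L s)
      = s * (4:ℝ)^s * Real.Gamma (s+1/2) * (Real.Gamma (1-s))⁻¹ * (L^(2*s))⁻¹ := by
    have : gg L s = Real.log s + Real.log 4 * s + Real.log (Real.Gamma (s+1/2))
        + (- Real.log (Real.Gamma (1-s))) + (- (Real.log L * (2*s))) := by
      simp only [gg]; ring
    rw [this, Real.exp_add, Real.exp_add, Real.exp_add, Real.exp_add,
      Real.exp_log hs0, Real.exp_log hΓh, Real.exp_neg, Real.exp_neg,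
      Real.exp_log hΓ1s, ← Real.rpow_def_of_pos (by norm_num : (0:ℝ) < 4),
      ← Real.rpow_def_of_pos hL]
  rw [e1]
  -- Gamma identities
  have A1 : Real.Gamma (1+2*s) = 2*s * Real.Gamma (2*s) := by
    rw [add_comm]; exact Real.Gamma_add_one (by positivity)
  have A2 := Real.Gamma_mul_Gamma_add_half s
  have A3 : Real.Gamma s * Real.Gamma (1-s) * Real.sin (π*s) = π := by
    rw [Real.Gamma_mul_Gamma_one_sub s, div_mul_cancel₀ _ hsin.ne']
  have A5 : L ^ (1+2*s) = L * L^(2*s) := by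
    rw [Real.rpow_add hL, Real.rpow_one]
  have A6 : (4:ℝ)^s * (2:ℝ)^(1-2*s) = 2 := by
    have h4 : (4:ℝ)^s = (2:ℝ)^(2*s) := by
      rw [show (4:ℝ) = (2:ℝ)^(2:ℝ) by
        rw [show (2:ℝ) = ((2:ℕ):ℝ) by norm_num, Real.rpow_natCast]; norm_num,
        ← Real.rpow_mul (by norm_num : (0:ℝ) ≤ 2)]
    rw [h4, ← Real.rpow_add (by norm_num : (0:ℝ) < 2)]
    norm_num
  have h2pow : 0 < (2:ℝ)^(1-2*s) := Real.rpow_pos_of_pos (by norm_num) _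
  have h4pow : 0 < (4:ℝ)^s := Real.rpow_pos_of_pos (by norm_num) _
  simp only [G1]
  rw [A1, A5]
  set Γs := Real.Gamma s with hΓsdef
  set Γh := Real.Gamma (s+1/2) with hΓhdef
  set Γ1s := Real.Gamma (1-s) with hΓ1sdef
  set G2 := Real.Gamma (2*s) with hG2def
  set S := Real.sin (π*s) with hSdef
  set u := (4:ℝ)^s with hudef
  set w := (2:ℝ)^(1-2*s) with hwdef
  set M := L^(2*s) with hMdef
  have hS : S = π/(Γs*Γ1s) := by
    rw [eq_div_iff (mul_pos hΓs hΓ1s).ne']; linear_combination A3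
  have hΓh' : Γh = G2*w*Real.sqrt π/Γs := by
    rw [eq_div_iff hΓs.ne']; linear_combination A2
  have hu : u = 2/w := by
    rw [eq_div_iff h2pow.ne']; linear_combination A6
  have hππ : Real.sqrt π * Real.sqrt π = π := Real.mul_self_sqrt Real.pi_pos.le
  rw [hS, hΓh', hu]
  have hπ : (0:ℝ) < π := Real.pi_pos
  field_simp



lemma log_sub_le_psi {x : ℝ} (hx : 0 < x) : Real.log x - 1/x ≤ psi x := by
  have h := log_le_psi (show (1:ℝ) < x + 1 by linarith)
  rw [add_sub_cancel_right, psi_rec hx] at h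
  linarith

lemma log_two_lt : Real.log 2 < 0.7 :=
  lt_trans Real.log_two_lt_d9 (by norm_num)

lemma log_four_le : Real.log 4 ≤ 1.4 := by
  rw [show (4:ℝ) = 2^(2:ℕ) by norm_num, Real.log_pow]
  push_cast
  nlinarith [log_two_lt]

lemma gd_pos {L s : ℝ} (hl : 9 ≤ Real.log L) (hs : s ∈ Ioo (0:ℝ) 1)
    (hsa : s < 1/(2*Real.log L + 14/3)) : 0 < gd L s := by
  obtain ⟨hs0, hs1⟩ := hs
  set l := Real.log L with hldef
  have hs4 : s ≤ 1/4 := by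
    have h1 : (1:ℝ)/(2*l+14/3) ≤ 1/4 := by
      rw [div_le_div_iff₀ (by linarith) (by norm_num)]; linarith
    linarith
  have hinv : 2*l + 14/3 < 1/s := by
    rw [lt_div_iff₀ hs0]
    calc (2*l+14/3)*s < (2*l+14/3)*(1/(2*l+14/3)) := by
          apply mul_lt_mul_of_pos_left hsa (by linarith)
      _ = 1 := mul_one_div_cancel (by linarith)
  have hp1 : Real.log (1/2) - 2 ≤ psi (s+1/2) := by
    have h := log_sub_le_psi (show (0:ℝ) < s + 1/2 by linarith)
    have h2 : Real.log (1/2) ≤ Real.log (s+1/2) :=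
      Real.log_le_log (by norm_num) (by linarith)
    have h3 : 1/(s+1/2) ≤ 2 := by
      rw [div_le_iff₀ (by linarith)]; linarith
    linarith
  have hp2 : Real.log (3/4) - 4/3 ≤ psi (1-s) := by
    have h := log_sub_le_psi (show (0:ℝ) < 1 - s by linarith)
    have h2 : Real.log (3/4) ≤ Real.log (1-s) :=
      Real.log_le_log (by norm_num) (by linarith)
    have h3 : 1/(1-s) ≤ 4/3 := by
      rw [div_le_iff₀ (by linarith)]; linarith
    linarith
  have hlog12 : Real.log (1/2) = - Real.log 2 := by
    rw [show (1:ℝ)/2 = 2⁻¹ by norm_num, Real.log_inv]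
  have hlog34 : -(1/3 : ℝ) ≤ Real.log (3/4) := by
    have := Real.log_le_sub_one_of_pos (show (0:ℝ) < 4/3 by norm_num)
    have h2 : Real.log (3/4) = - Real.log (4/3) := by
      rw [show (3:ℝ)/4 = (4/3)⁻¹ by norm_num, Real.log_inv]
    rw [h2]; linarith
  have hlog4 : 0 ≤ Real.log 4 := Real.log_nonneg (by norm_num)
  simp only [gd, ← hldef]
  nlinarith [log_two_lt]

lemma gd_neg {L s : ℝ} (hl : 9 ≤ Real.log L) (hs : s ∈ Ioo (0:ℝ) 1)
    (hsb : 1/(2*Real.log L - 3) < s) : gd L s < 0 := by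
  obtain ⟨hs0, hs1⟩ := hs
  set l := Real.log L with hldef
  have hinv : 1/s < 2*l - 3 := by
    rw [div_lt_iff₀ hs0]
    have h1 : 1 = (2*l-3) * (1/(2*l-3)) := (mul_one_div_cancel (by linarith)).symm
    calc (1:ℝ) = (2*l-3) * (1/(2*l-3)) := h1
      _ < (2*l-3)*s := by apply mul_lt_mul_of_pos_left hsb (by linarith)
      _ = (2*l-3)*s := rfl
  have hp1 : psi (s+1/2) ≤ Real.log 2 := by
    have h := psi_le_log (show (0:ℝ) < s + 1/2 by linarith)
    have h2 : Real.log (s+1/2) ≤ Real.log 2 :=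
      Real.log_le_log (by linarith) (by linarith)
    linarith
  have hp2 : psi (1-s) ≤ 0 := by
    have h := psi_le_log (show (0:ℝ) < 1 - s by linarith)
    have h2 : Real.log (1-s) ≤ 0 := Real.log_nonpos (by linarith) (by linarith)
    linarith
  simp only [gd, ← hldef]
  nlinarith [log_two_lt, log_four_le]

lemma gd_anti {L s₁ s₂ : ℝ} (h1 : 0 < s₁) (h12 : s₁ < s₂) (h2 : s₂ ≤ 1/4) :
    gd L s₂ < gd L s₁ := by
  have hlip : psi (s₂+1/2) ≤ psi (s₁+1/2) + 6*(s₂ - s₁) := by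
    have := psi_lipschitz (show (1:ℝ)/2 ≤ s₁+1/2 by linarith)
      (show s₁+1/2 ≤ s₂+1/2 by linarith)
    linarith
  have hmono : psi (1-s₂) ≤ psi (1-s₁) := by
    apply psi_mono (mem_Ioi.2 (by linarith)) (mem_Ioi.2 (by linarith)) (by linarith)
  have hfrac : 16 * (s₂ - s₁) < 1/s₁ - 1/s₂ := by
    have e : 1/s₁ - 1/s₂ = (s₂ - s₁)/(s₁*s₂) := by
      rw [div_sub_div _ _ h1.ne' (by linarith : s₂ ≠ 0)]
      congr 1; ring
    rw [e]
    rw [lt_div_iff₀ (by nlinarith)]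
    have hs14 : s₁ < 1/4 := lt_of_lt_of_le h12 h2
    have hprod : s₁*s₂ < 1/16 := by nlinarith
    nlinarith [hprod, sub_pos.2 h12]
  simp only [gd]
  linarith



lemma G1_hasDeriv {T L : ℝ} (hL : 0 < L) {s : ℝ} (hs : s ∈ Ioo (0:ℝ) 1) :
    HasDerivAt (fun σ => G1 σ L T)
      ((T/(2*Real.sqrt π*L)) * Real.exp (gg L s) * gd L s) s := by
  have h := ((gg_hasDeriv L hs).exp.const_mul (T/(2*Real.sqrt π*L)))
  rw [← mul_assoc] at h
  apply h.congr_of_eventuallyEq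
  filter_upwards [isOpen_Ioo.mem_nhds hs] with t ht
  exact G1_eq hL ht

lemma main_lemma (T L : ℝ) (hT : 0 < T) (hL0 : 0 < L) (hl : 9 ≤ Real.log L) :
    ∃ x, x ∈ Ioo (0:ℝ) 1 ∧ x ≤ 1/Real.log L ∧
      (∀ s ∈ Ioo (0:ℝ) 1, (deriv (fun σ => G1 σ L T) s = 0 ↔ s = x)) ∧
      (∀ s ∈ Ioo (0:ℝ) 1, G1 s L T ≤ G1 x L T) := by
  set l := Real.log L with hldef
  set C := T/(2*Real.sqrt π*L) with hCdef
  have hC : 0 < C := by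
    have := Real.sqrt_pos.2 Real.pi_pos
    exact div_pos hT (by positivity)
  set F := fun σ => G1 σ L T with hFdef
  set a := 1/(2*l+5) with hadef
  set a0 := 1/(2*l+14/3) with ha0def
  set b0 := 1/(2*l-3) with hb0def
  set b := 1/(2*l-4) with hbdef
  have hl2 : (0:ℝ) < 2*l-4 := by linarith
  have ha_pos : 0 < a := by positivity
  have haa0 : a < a0 := by
    rw [hadef, ha0def, div_lt_div_iff₀ (by linarith) (by linarith)]; linarith
  have ha0b0 : a0 < b0 := by
    rw [ha0def, hb0def, div_lt_div_iff₀ (by linarith) (by linarith)]; linarith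
  have hb0b : b0 < b := by
    rw [hb0def, hbdef, div_lt_div_iff₀ (by linarith) (by linarith)]; linarith
  have hb4 : b ≤ 1/4 := by
    rw [hbdef, div_le_div_iff₀ (by linarith) (by norm_num)]; linarith
  have hb1 : b < 1 := by linarith
  have hIccsub : Icc a b ⊆ Ioo (0:ℝ) 1 := fun t ht =>
    ⟨lt_of_lt_of_le ha_pos ht.1, lt_of_le_of_lt ht.2 hb1⟩
  have hderiv : ∀ s ∈ Ioo (0:ℝ) 1, deriv F s = C * Real.exp (gg L s) * gd L s :=
    fun s hs => (G1_hasDeriv hL0 hs).deriv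
  have hderiv_pos : ∀ s ∈ Ioo (0:ℝ) 1, 0 < gd L s → 0 < deriv F s := by
    intro s hs h
    rw [hderiv s hs]
    have := Real.exp_pos (gg L s)
    positivity
  have hderiv_neg : ∀ s ∈ Ioo (0:ℝ) 1, gd L s < 0 → deriv F s < 0 := by
    intro s hs h
    rw [hderiv s hs]
    have := Real.exp_pos (gg L s)
    apply mul_neg_of_pos_of_neg (by positivity) h
  have hcont : ContinuousOn F (Ioo (0:ℝ) 1) := fun s hs =>
    ((G1_hasDeriv hL0 hs).continuousAt).continuousWithinAt
  -- maximum on [a,b]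
  obtain ⟨x, hxmem, hxmax⟩ := isCompact_Icc.exists_isMaxOn
    (nonempty_Icc.2 (by linarith : a ≤ b)) (hcont.mono hIccsub)
  -- x ≠ a
  have hxa : x ≠ a := by
    intro hxeq
    set a' := (a+a0)/2 with ha'def
    have ha'1 : a < a' := by rw [ha'def]; linarith
    have ha'2 : a' < a0 := by rw [ha'def]; linarith
    have hmono : StrictMonoOn F (Icc a a') := by
      apply strictMonoOn_of_deriv_pos (convex_Icc a a')
      · apply hcont.mono
        intro t ht
        exact hIccsub ⟨ht.1, le_trans ht.2 (by linarith)⟩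
      · intro t ht
        rw [interior_Icc] at ht
        have htI : t ∈ Ioo (0:ℝ) 1 := ⟨lt_trans ha_pos ht.1, by linarith [ht.2]⟩
        exact hderiv_pos t htI (gd_pos hl htI (by linarith [ht.2]))
    have : F a < F a' := hmono ⟨le_refl a, ha'1.le⟩ ⟨ha'1.le, le_refl a'⟩ ha'1
    have hcontra := hxmax (show a' ∈ Icc a b from ⟨ha'1.le, by linarith⟩)
    rw [hxeq] at hcontra
    simp only [mem_setOf_eq] at hcontra
    linarith
  -- x ≠ b
  have hxb : x ≠ b := by
    intro hxeq
    set b' := (b0+b)/2 with hb'def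
    have hb'1 : b0 < b' := by rw [hb'def]; linarith
    have hb'2 : b' < b := by rw [hb'def]; linarith
    have hanti : StrictAntiOn F (Icc b' b) := by
      apply strictAntiOn_of_deriv_neg (convex_Icc b' b)
      · apply hcont.mono
        intro t ht
        exact hIccsub ⟨le_trans (by linarith) ht.1, ht.2⟩
      · intro t ht
        rw [interior_Icc] at ht
        have htI : t ∈ Ioo (0:ℝ) 1 :=
          ⟨by linarith [ht.1], lt_of_lt_of_le ht.2 (by linarith)⟩
        exact hderiv_neg t htI (gd_neg hl htI (by linarith [ht.1]))
    have : F b < F b' := by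
      have := hanti ⟨le_refl b', hb'2.le⟩ ⟨hb'2.le, le_refl b⟩ hb'2
      linarith [this]
    have hcontra := hxmax (show b' ∈ Icc a b from ⟨by linarith, hb'2.le⟩)
    rw [hxeq] at hcontra
    simp only [mem_setOf_eq] at hcontra
    linarith
  have hax : a < x := lt_of_le_of_ne hxmem.1 (Ne.symm hxa)
  have hxb' : x < b := lt_of_le_of_ne hxmem.2 hxb
  have hxI : x ∈ Ioo (0:ℝ) 1 := ⟨lt_trans ha_pos hax, lt_trans hxb' hb1⟩
  -- critical point
  have hcrit : deriv F x = 0 := by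
    have hloc : IsLocalMax F x := hxmax.isLocalMax (Icc_mem_nhds hax hxb')
    exact hloc.deriv_eq_zero
  have hgdx : gd L x = 0 := by
    have h := hderiv x hxI
    rw [hcrit] at h
    have hepos : 0 < C * Real.exp (gg L x) := by
      have := Real.exp_pos (gg L x); positivity
    have := h.symm
    rcases mul_eq_zero.1 this with h' | h'
    · exact absurd h' hepos.ne'
    · exact h'
  have hx4 : x ≤ 1/4 := by linarith
  -- global signs
  have hsignpos : ∀ s ∈ Ioo (0:ℝ) 1, s < x → 0 < gd L s := by
    intro s hs hsx
    have h := gd_anti (L := L) hs.1 hsx hx4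
    rw [hgdx] at h; linarith
  have hsignneg : ∀ s ∈ Ioo (0:ℝ) 1, x < s → gd L s < 0 := by
    intro s hs hxs
    by_cases h4 : s ≤ 1/4
    · have h := gd_anti (L := L) hxI.1 hxs h4
      rw [hgdx] at h; linarith
    · push_neg at h4
      exact gd_neg hl hs (by linarith)
  have hiff : ∀ s ∈ Ioo (0:ℝ) 1, (deriv F s = 0 ↔ s = x) := by
    intro s hs
    constructor
    · intro h0
      rcases lt_trichotomy s x with h|h|h
      · exact absurd h0 (ne_of_gt (hderiv_pos s hs (hsignpos s hs h)))
      · exact h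
      · exact absurd h0 (ne_of_lt (hderiv_neg s hs (hsignneg s hs h)))
    · rintro rfl; exact hcrit
  have hmono2 : StrictMonoOn F (Ioc 0 x) := by
    apply strictMonoOn_of_deriv_pos (convex_Ioc 0 x)
    · apply hcont.mono
      intro t ht
      exact ⟨ht.1, lt_of_le_of_lt ht.2 hxI.2⟩
    · intro t ht
      rw [interior_Ioc] at ht
      have htI : t ∈ Ioo (0:ℝ) 1 := ⟨ht.1, lt_trans ht.2 hxI.2⟩
      exact hderiv_pos t htI (hsignpos t htI ht.2)
  have hanti2 : StrictAntiOn F (Ico x 1) := by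
    apply strictAntiOn_of_deriv_neg (convex_Ico x 1)
    · apply hcont.mono
      intro t ht
      exact ⟨lt_of_lt_of_le hxI.1 ht.1, ht.2⟩
    · intro t ht
      rw [interior_Ico] at ht
      have htI : t ∈ Ioo (0:ℝ) 1 := ⟨lt_trans hxI.1 ht.1, ht.2⟩
      exact hderiv_neg t htI (hsignneg t htI ht.1)
  have hmax2 : ∀ s ∈ Ioo (0:ℝ) 1, F s ≤ F x := by
    intro s hs
    rcases lt_trichotomy s x with h|h|h
    · exact (hmono2 ⟨hs.1, h.le⟩ ⟨hxI.1, le_refl x⟩ h).le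
    · rw [h]
    · exact (hanti2 ⟨le_refl x, hxI.2⟩ ⟨h.le, hs.2⟩ h).le
  have hxl : x ≤ 1/l := by
    have hb' : b ≤ 1/l := by
      rw [hbdef, div_le_div_iff₀ hl2 (by linarith)]; linarith
    linarith
  exact ⟨x, hxI, hxl, hiff, hmax2⟩

theorem stmt14 (T : ℝ) (hT : 0 < T) :
    ∃ L₀ > (0:ℝ), ∃ sfun : ℝ → ℝ,
      (∀ L ≥ L₀, sfun L ∈ Set.Ioo (0:ℝ) 1 ∧
        (∀ s ∈ Set.Ioo (0:ℝ) 1, (deriv (fun σ => G1 σ L T) s = 0 ↔ s = sfun L)) ∧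
        (∀ s ∈ Set.Ioo (0:ℝ) 1, G1 s L T ≤ G1 (sfun L) L T)) ∧
      Filter.Tendsto sfun Filter.atTop (nhds 0) := by
  refine ⟨Real.exp 9, Real.exp_pos 9, ?_⟩
  have hex : ∀ L : ℝ, Real.exp 9 ≤ L →
      ∃ x, x ∈ Ioo (0:ℝ) 1 ∧ x ≤ 1/Real.log L ∧
        (∀ s ∈ Ioo (0:ℝ) 1, (deriv (fun σ => G1 σ L T) s = 0 ↔ s = x)) ∧
        (∀ s ∈ Ioo (0:ℝ) 1, G1 s L T ≤ G1 x L T) := by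
    intro L hL
    have hL0 : 0 < L := lt_of_lt_of_le (Real.exp_pos 9) hL
    have hl : 9 ≤ Real.log L := by
      calc (9:ℝ) = Real.log (Real.exp 9) := (Real.log_exp 9).symm
        _ ≤ Real.log L := Real.log_le_log (Real.exp_pos 9) hL
    exact main_lemma T L hT hL0 hl
  classical
  refine ⟨fun L => if h : ∃ x, x ∈ Ioo (0:ℝ) 1 ∧ x ≤ 1/Real.log L ∧
        (∀ s ∈ Ioo (0:ℝ) 1, (deriv (fun σ => G1 σ L T) s = 0 ↔ s = x)) ∧
        (∀ s ∈ Ioo (0:ℝ) 1, G1 s L T ≤ G1 x L T) then h.choose else 0, ?_, ?_⟩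
  · intro L hL
    have h := hex L hL
    have hch := h.choose_spec
    simp only [dif_pos h]
    exact ⟨hch.1, hch.2.2.1, hch.2.2.2⟩
  · apply squeeze_zero' (g := fun L => 1/Real.log L)
    · filter_upwards [eventually_ge_atTop (Real.exp 9)] with L hL
      have h := hex L hL
      have hch := h.choose_spec
      simp only [dif_pos h]
      exact hch.1.1.le
    · filter_upwards [eventually_ge_atTop (Real.exp 9)] with L hL
      have h := hex L hL
      have hch := h.choose_spec
      simp only [dif_pos h]
      exact hch.2.1
    · simp only [one_div]; exact Real.tendsto_log_atTop.inv_tendsto_atTop
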